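/- For k ≥ 2, a layer L of a subdivided wall W that is different from the perimeter and defines a subwall of height k contains exactly 4k − 2 important vertices. -/

import Mathlib

/-- `v` (with 1-indexed coordinates `(x, y)`) is a vertex of the wall `W_k` of height `k`:
it lies in the `(k+1) × (2k+2)` grid and is not one of the vertices of degree 1 that get
deleted in the construction of the wall. -/
def IsWallVertex (k : ℕ) (v : ℕ × ℕ) : Prop :=
  1 ≤ v.1 ∧ v.1 ≤ 2 * k + 2 ∧ 1 ≤ v.2 ∧ v.2 ≤ k + 1 ∧
  ¬(v.1 = 2 * k + 2 ∧ v.2 = 1) ∧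
  ¬(v.1 = 1 ∧ v.2 = k + 1 ∧ Even k) ∧
  ¬(v.1 = 2 * k + 2 ∧ v.2 = k + 1 ∧ Odd k)

/-- Adjacency of the wall `W_k`: horizontal grid edges, together with the vertical grid
edges `{(x,y),(x,y+1)}` for which `x + y` is even (equivalently, the vertical edges with
`x + y` odd have been removed). -/
def wallAdj (k : ℕ) (u v : ℕ × ℕ) : Prop :=
  IsWallVertex k u ∧ IsWallVertex k v ∧
  ((u.2 = v.2 ∧ (u.1 + 1 = v.1 ∨ v.1 + 1 = u.1)) ∨
   (u.1 = v.1 ∧ ((u.2 + 1 = v.2 ∧ Even (u.1 + u.2)) ∨ (v.2 + 1 = u.2 ∧ Even (v.1 + v.2)))))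

/-- The wall `W_k` of height `k`, as a simple graph on `ℕ × ℕ` (vertices outside the wall
are isolated). -/
def wallGraph (k : ℕ) : SimpleGraph (ℕ × ℕ) where
  Adj := wallAdj k
  symm := by
    constructor
    rintro u v ⟨hu, hv, hc⟩
    refine ⟨hv, hu, ?_⟩
    rcases hc with ⟨h1, h2⟩ | ⟨h1, h2⟩
    · exact Or.inl ⟨h1.symm, h2.symm⟩
    · exact Or.inr ⟨h1.symm, h2.symm⟩
  loopless := by
    constructor
    rintro u ⟨-, -, hc⟩
    rcases hc with ⟨-, h2⟩ | ⟨-, h2⟩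
    · omega
    · rcases h2 with ⟨h3, -⟩ | ⟨h3, -⟩ <;> omega

/-- The degree of a vertex in a (possibly infinite) simple graph, as the cardinality of its
neighbourhood. -/
noncomputable def vdeg {α : Type*} (G : SimpleGraph α) (v : α) : ℕ := (G.neighborSet v).ncard

/-- The vertices of the perimeter (boundary cycle) of the wall `W_k`: the union of the
northern and southern horizontal paths with the westernmost and easternmost vertical
(zigzag) paths. -/
def wallPerimeter (k : ℕ) : Set (ℕ × ℕ) :=
  {v | IsWallVertex k v ∧
    (v.2 = 1 ∨ v.2 = k + 1 ∨ v.1 = 1 ∨ v.1 = 2 ∨ v.1 = 2 * k + 1 ∨ v.1 = 2 * k + 2)}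

/-- The rectangular region of the wall `W_m` delimited by its `i`-th layer. -/
def wallRegion (m i : ℕ) : Set (ℕ × ℕ) :=
  {v | IsWallVertex m v ∧ i ≤ v.2 ∧ v.2 ≤ m + 2 - i ∧
    2 * i - 1 ≤ v.1 ∧ v.1 ≤ 2 * m + 4 - 2 * i}

/-- The vertex set of the subwall of `W_m` defined by its `i`-th layer: the vertices of
the region delimited by the layer that survive the deletion of vertices of degree 1
(this is the wall obtained by recursively peeling off the first `i - 1` layers). -/
def subwallSet (m i : ℕ) : Set (ℕ × ℕ) :=
  {v ∈ wallRegion m i |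
    2 ≤ ((wallGraph m).neighborSet v ∩ wallRegion m i).ncard}

/-- The `i`-th layer of the wall `W_m`: the perimeter of the subwall defined by it. -/
def layerSet (m i : ℕ) : Set (ℕ × ℕ) :=
  {v ∈ subwallSet m i |
    v.2 = i ∨ v.2 = m + 2 - i ∨ v.1 = 2 * i - 1 ∨ v.1 = 2 * i ∨
    v.1 = 2 * m + 3 - 2 * i ∨ v.1 = 2 * m + 4 - 2 * i}

/-- The four corners of the subwall of `W_m` defined by its `i`-th layer: the endpoints of
its northern and southern horizontal paths. -/
def subwallCorners (m i : ℕ) : Set (ℕ × ℕ) :=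
  {v ∈ layerSet m i | (v.2 = i ∨ v.2 = m + 2 - i) ∧
    ¬((v.1 - 1, v.2) ∈ subwallSet m i ∧ (v.1 + 1, v.2) ∈ subwallSet m i)}

/-- The important vertices of the `i`-th layer of `W_m`: the (original) vertices on the
layer that have degree 2 in the subwall `W'` defined by the layer and are not corners
of `W'`. -/
def importantVertices (m i : ℕ) : Set (ℕ × ℕ) :=
  {v ∈ layerSet m i |
    ((wallGraph m).neighborSet v ∩ subwallSet m i).ncard = 2 ∧
    v ∉ subwallCorners m i}


/-!
Write `R` for the box `[2i - 1, 2k + 2i] × [i, k + i]` cut out by the `i`-th layer. In the brick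
pattern every vertex `(x, y)` is adjacent to `(x ± 1, y)` and to a single vertical partner,
`(x, y + 1)` when `x + y` is even and `(x, y - 1)` otherwise. Hence the only vertices of `R` with
fewer than two neighbours in `R` are the corners of `R` whose partner leaves `R`, and the subwall is
`R` without them. In the outer columns `x = 2i - 1` and `x = 2k + 2i`, each of the `k - 1`
vertices strictly between the horizontal sides has degree two, while the rest of the zigzag sides
has degree three. On a horizontal side, a vertex that is not a corner has degree two exactly when
its partner points out of `R`; this happens for every other vertex, `k` of them per side.
Altogether there are `2 (k - 1) + 2 k = 4 k - 2` important vertices.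
-/

def verticalPartner (v : ℕ × ℕ) : ℕ × ℕ :=
  if Even (v.1 + v.2) then (v.1, v.2 + 1) else (v.1, v.2 - 1)

lemma ncard_triple_inter {α : Type*} {a b c : α} (hab : a ≠ b) (hac : a ≠ c) (hbc : b ≠ c)
    (T : Set α) [DecidablePred (· ∈ T)] :
    ({a, b, c} ∩ T).ncard =
      (if a ∈ T then 1 else 0) + (if b ∈ T then 1 else 0) + (if c ∈ T then 1 else 0) := by
  classical
  have : ({a, b, c} ∩ T : Set α) = ↑(({a, b, c} : Finset α).filter (· ∈ T)) := by
    ext; simp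
  rw [this, Set.ncard_coe_finset, Finset.card_filter, Finset.sum_insert (by simp [hab, hac]),
    Finset.sum_pair hbc, add_assoc]

lemma wallGraph_adj_iff {m : ℕ} {u v : ℕ × ℕ} (hu : IsWallVertex m u) (hv : IsWallVertex m v) :
    (wallGraph m).Adj u v ↔ v = (u.1 + 1, u.2) ∨ v = (u.1 - 1, u.2) ∨ v = verticalPartner u := by
  obtain ⟨x, y⟩ := u
  obtain ⟨a, b⟩ := v
  have hx : 1 ≤ x := hu.1
  have hy : 1 ≤ y := hu.2.2.1
  change wallAdj m _ _ ↔ _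
  simp only [wallAdj, hu, hv, verticalPartner, Nat.even_iff, true_and]
  split_ifs <;> simp only [Prod.mk.injEq] <;> omega

lemma neighborSet_inter_eq {m : ℕ} {v : ℕ × ℕ} {T : Set (ℕ × ℕ)} (hv : IsWallVertex m v)
    (hT : ∀ w ∈ T, IsWallVertex m w) :
    (wallGraph m).neighborSet v ∩ T = {(v.1 + 1, v.2), (v.1 - 1, v.2), verticalPartner v} ∩ T := by
  ext w
  exact and_congr_left fun hw => wallGraph_adj_iff hv (hT w hw)

lemma ncard_neighborSet_inter {m : ℕ} {v : ℕ × ℕ} {T : Set (ℕ × ℕ)} [DecidablePred (· ∈ T)]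
    (hv : IsWallVertex m v) (hT : ∀ w ∈ T, IsWallVertex m w) :
    ((wallGraph m).neighborSet v ∩ T).ncard =
      (if (v.1 + 1, v.2) ∈ T then 1 else 0) + (if (v.1 - 1, v.2) ∈ T then 1 else 0) +
        (if verticalPartner v ∈ T then 1 else 0) := by
  have hx : 1 ≤ v.1 := hv.1
  have hy : 1 ≤ v.2 := hv.2.2.1
  rw [neighborSet_inter_eq hv hT]
  apply ncard_triple_inter <;> simp only [verticalPartner, ne_eq] <;> (try split_ifs) <;>
    simp only [Prod.mk.injEq] <;> omega

def layerImportantFinset (i k : ℕ) : Finset (ℕ × ℕ) :=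
  ((Finset.range k).image fun t => (2 * i + 2 * t + (i + 1) % 2, i)) ∪
    ((Finset.range k).image fun t => (2 * i + 2 * t + (k + i) % 2, k + i)) ∪
    {2 * i - 1, 2 * k + 2 * i} ×ˢ Finset.Ioo i (k + i)

lemma mem_layerImportantFinset {i k : ℕ} {v : ℕ × ℕ} :
    v ∈ layerImportantFinset i k ↔
      ((v.2 = i ∧ (v.1 + v.2) % 2 = 1 ∨ v.2 = k + i ∧ (v.1 + v.2) % 2 = 0) ∧
          2 * i ≤ v.1 ∧ v.1 < 2 * k + 2 * i) ∨
        ((v.1 = 2 * i - 1 ∨ v.1 = 2 * k + 2 * i) ∧ i < v.2 ∧ v.2 < k + i) := by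
  obtain ⟨x, y⟩ := v
  simp only [layerImportantFinset, Finset.mem_union, Finset.mem_image, Finset.mem_range,
    Finset.mem_product, Finset.mem_insert, Finset.mem_singleton, Finset.mem_Ioo, Prod.mk.injEq]
  constructor
  · rintro ((⟨t, ht, rfl, rfl⟩ | ⟨t, ht, rfl, rfl⟩) | h) <;> omega
  · rintro (⟨hrow | hrow, hx⟩ | h)
    · exact Or.inl (Or.inl ⟨(x - 2 * i) / 2, by omega, by omega, by omega⟩)
    · exact Or.inl (Or.inr ⟨(x - 2 * i) / 2, by omega, by omega, by omega⟩)
    · exact Or.inr h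

lemma card_layerImportantFinset {i k : ℕ} (hk : 1 ≤ k) :
    (layerImportantFinset i k).card = 4 * k - 2 := by
  have hrow (c y : ℕ) : ((Finset.range k).image fun t => (2 * i + 2 * t + c, y)).card = k := by
    rw [Finset.card_image_of_injective _ fun s t h => by simp only [Prod.mk.injEq] at h; omega,
      Finset.card_range]
  rw [layerImportantFinset, Finset.card_union_of_disjoint, Finset.card_union_of_disjoint,
    hrow, hrow, Finset.card_product, Finset.card_pair (by omega), Nat.card_Ioo]
  · omega
  all_goals
    rw [Finset.disjoint_left]
    rintro ⟨x, y⟩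
    simp only [Finset.mem_union, Finset.mem_image, Finset.mem_range, Finset.mem_product,
      Finset.mem_Ioo, Prod.mk.injEq]
    omega

section Layer

variable {m i k : ℕ}

lemma mem_wallRegion_iff (hi : 2 ≤ i) (hmk : m + 2 = k + 2 * i) {v : ℕ × ℕ} :
    v ∈ wallRegion m i ↔ 2 * i - 1 ≤ v.1 ∧ v.1 ≤ 2 * k + 2 * i ∧ i ≤ v.2 ∧ v.2 ≤ k + i := by
  simp only [wallRegion, IsWallVertex, Set.mem_ofPred_eq, Nat.even_iff, Nat.odd_iff]
  omega

lemma mem_subwallSet_iff (hi : 2 ≤ i) (hmk : m + 2 = k + 2 * i) {v : ℕ × ℕ} :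
    v ∈ subwallSet m i ↔ v ∈ wallRegion m i ∧
      ¬((v.1 = 2 * i - 1 ∨ v.1 = 2 * k + 2 * i) ∧
        (v.2 = i ∧ (v.1 + v.2) % 2 = 1 ∨ v.2 = k + i ∧ (v.1 + v.2) % 2 = 0)) := by
  classical
  refine and_congr_right fun hv => ?_
  rw [ncard_neighborSet_inter hv.1 fun w hw => hw.1]
  simp only [mem_wallRegion_iff hi hmk, verticalPartner, Nat.even_iff] at hv ⊢
  split_ifs <;> omega

lemma verticalPartner_mem_subwallSet_iff (hi : 2 ≤ i) (hmk : m + 2 = k + 2 * i) {v : ℕ × ℕ}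
    (hv : v ∈ wallRegion m i) :
    verticalPartner v ∈ subwallSet m i ↔ verticalPartner v ∈ wallRegion m i := by
  rw [mem_subwallSet_iff hi hmk, and_iff_left_iff_imp]
  rw [mem_wallRegion_iff hi hmk] at hv ⊢
  unfold verticalPartner
  split_ifs with h <;> rw [Nat.even_iff] at h <;> omega

lemma ncard_neighborSet_inter_subwallSet (hi : 2 ≤ i) (hmk : m + 2 = k + 2 * i) {v : ℕ × ℕ}
    [DecidablePred (· ∈ subwallSet m i)] [DecidablePred (· ∈ wallRegion m i)]
    (hv : v ∈ subwallSet m i) :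
    ((wallGraph m).neighborSet v ∩ subwallSet m i).ncard =
      (if (v.1 + 1, v.2) ∈ subwallSet m i then 1 else 0) +
        (if (v.1 - 1, v.2) ∈ subwallSet m i then 1 else 0) +
        (if verticalPartner v ∈ wallRegion m i then 1 else 0) := by
  rw [ncard_neighborSet_inter hv.1.1 fun w hw => hw.1.1,
    if_congr (verticalPartner_mem_subwallSet_iff hi hmk hv.1) rfl rfl]

lemma mem_importantVertices_iff_of_row (hi : 2 ≤ i) (hmk : m + 2 = k + 2 * i) {v : ℕ × ℕ}
    (hv : v ∈ subwallSet m i) (hrow : v.2 = i ∨ v.2 = k + i) :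
    v ∈ importantVertices m i ↔ (v.1 - 1, v.2) ∈ subwallSet m i ∧
      (v.1 + 1, v.2) ∈ subwallSet m i ∧ verticalPartner v ∉ wallRegion m i := by
  classical
  replace hrow : v.2 = i ∨ v.2 = m + 2 - i := by omega
  have hlayer : v ∈ layerSet m i := ⟨hv, by omega⟩
  simp only [importantVertices, subwallCorners, Set.mem_ofPred_eq, hlayer, hrow, true_and,
    ncard_neighborSet_inter_subwallSet hi hmk hv]
  split_ifs <;> simp_all

lemma mem_importantVertices_iff_of_not_row (hi : 2 ≤ i) (hmk : m + 2 = k + 2 * i)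
    {v : ℕ × ℕ} (hv : v ∈ subwallSet m i) (hy : v.2 ≠ i) (hy' : v.2 ≠ k + i) :
    v ∈ importantVertices m i ↔ v.1 = 2 * i - 1 ∨ v.1 = 2 * k + 2 * i := by
  classical
  have hbox := (mem_wallRegion_iff hi hmk).1 hv.1
  have hpartner : verticalPartner v ∈ wallRegion m i := by
    rw [mem_wallRegion_iff hi hmk]
    unfold verticalPartner
    split_ifs <;> omega
  have hcol : 2 * m + 3 - 2 * i = 2 * k + 2 * i - 1 ∧ 2 * m + 4 - 2 * i = 2 * k + 2 * i ∧
      m + 2 - i = k + i := by omega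
  simp only [importantVertices, subwallCorners, layerSet, Set.mem_ofPred_eq,
    ncard_neighborSet_inter_subwallSet hi hmk hv, hpartner, if_true, hcol, hy, hy', false_or,
    false_and, and_false, not_false_eq_true, and_true, mem_subwallSet_iff hi hmk,
    mem_wallRegion_iff hi hmk]
  split_ifs <;> omega

lemma importantVertices_eq (hi : 2 ≤ i) (hk : 1 ≤ k) (hmk : m + 2 = k + 2 * i) :
    importantVertices m i = layerImportantFinset i k := by
  ext v
  rw [Finset.mem_coe, mem_layerImportantFinset]
  by_cases hv : v ∈ subwallSet m i
  · by_cases hrow : v.2 = i ∨ v.2 = k + i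
    · rw [mem_importantVertices_iff_of_row hi hmk hv hrow]
      rw [mem_subwallSet_iff hi hmk, mem_wallRegion_iff hi hmk] at hv
      simp only [mem_subwallSet_iff hi hmk, mem_wallRegion_iff hi hmk, verticalPartner,
        Nat.even_iff]
      split_ifs <;> omega
    · rw [mem_importantVertices_iff_of_not_row hi hmk hv (by omega) (by omega)]
      have := (mem_wallRegion_iff hi hmk).1 hv.1
      omega
  · refine iff_of_false (fun h => hv h.1.1) ?_
    rw [mem_subwallSet_iff hi hmk, mem_wallRegion_iff hi hmk] at hv
    omega

end Layer

/-- for `k ≥ 2`, a layer of a wall that is different from the perimeter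
(`2 ≤ i`) and defines a subwall of height `k` (i.e. `m + 2 = k + 2i`) contains exactly
`4k - 2` important vertices. -/
theorem card_importantVertices (m i k : ℕ) (hi : 2 ≤ i) (hk : 2 ≤ k)
    (hmk : m + 2 = k + 2 * i) :
    (importantVertices m i).ncard = 4 * k - 2 := by
  rw [importantVertices_eq hi (by omega) hmk, Set.ncard_coe_finset,
    card_layerImportantFinset (by omega)]
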